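/- arXiv:2005.07221 — 2 statements merged into one kernel-verified Lean document; each statement's English description precedes it below -/
import Mathlib

section
/- Define integers n_1 = 1 and n_{k+1} = n_k + 10^k + 1 for k ≥ 1, sets A_k = {n_k + 1, …, n_k + 10^k}, and the real sequence (b_j)_{j≥1} by b_j = 1/√k if j = n_k and b_j = −1/(10^k·√k) if j ∈ A_k. Then for every t ∈ (0,1], the quantity inf{ sup_{N ≥ 1} |∑_{i∈Λ, i ≤ N} b_i| : Λ is a t-greedy set for b with |Λ| = m } tends to +∞ as m → ∞; that is, for every R > 0 there is m_0 such that for all m ≥ m_0 and every t-greedy set Λ for b of cardinality m, sup_{N ≥ 1} |∑_{i∈Λ, i ≤ N} b_i| > R. (Interpreted in the completion of c_00 under the norm ‖(a_j)_j‖ = sup_N |∑_{j=1}^{N} a_j|, this says that every sequence of weak greedy sums of the element y = ∑ b_j e_j diverges in norm, so no choice of a sequence of gaps makes the thresholding greedy algorithm converge for y.) -/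
open Finset

/-!
Let `s = min_{i ∈ Λ} |b_i|`. Only entries with `|b_j| ≥ s` lie in `Λ`: peaks `n_k` with
`k ≤ s⁻²`, and negative entries from blocks `A_l` with `l ≤ L`, where `s · 10^L ≤ 1`. There
are fewer than `10^(L+1)` of the latter, each block contributes mass at most `1`, and
`L² ≤ 10^L` gives `s L ≤ √s`. Counting yields `m s² ≤ 11`, so `s → 0` as `m → ∞`.
Conversely, the `t`-greedy condition forces every peak `n_k` with `s √k < t` into `Λ`, so the
partial sum up to `n_K` with `√K ≈ t / s` is at least `√K - L`, which is of order
`t / s - s^(-1/2) → ∞`.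
-/

/-- `nn k` is the integer `n_k` of the construction: `n_1 = 1`,
`n_{k+1} = n_k + 10^k + 1` for `k ≥ 1` (the value at `0` is irrelevant). -/
def nn : ℕ → ℕ
  | 0 => 0
  | 1 => 1
  | (k + 2) => nn (k + 1) + 10 ^ (k + 1) + 1

lemma nn_succ {k : ℕ} (hk : 1 ≤ k) : nn (k + 1) = nn k + 10 ^ k + 1 := by
  obtain ⟨j, rfl⟩ := Nat.exists_eq_add_of_le' hk
  rfl

lemma nn_strictMonoOn : StrictMonoOn nn (Set.Ici 1) :=
  strictMonoOn_of_lt_add_one Set.ordConnected_Ici fun k _ hk _ => by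
    rw [nn_succ hk]; exact Nat.lt_succ_of_le (Nat.le_add_right _ _)

lemma le_nn {k : ℕ} (hk : 1 ≤ k) : k ≤ nn k := by
  induction k, hk using Nat.le_induction with
  | base => rfl
  | succ k hk ih =>
    have : 1 ≤ 10 ^ k := Nat.one_le_pow _ _ (by norm_num)
    rw [nn_succ hk]; omega

/-- The block index of `j ≥ 1`: the `k ≥ 1` with `nn k ≤ j < nn (k + 1)`. -/
def blk (j : ℕ) : ℕ := Nat.findGreatest (fun k => nn k ≤ j) j

lemma one_le_blk {j : ℕ} (hj : 1 ≤ j) : 1 ≤ blk j :=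
  Nat.le_findGreatest hj hj

lemma nn_blk_le {j : ℕ} (hj : 1 ≤ j) : nn (blk j) ≤ j :=
  Nat.findGreatest_spec (P := fun k => nn k ≤ j) hj hj

lemma le_nn_blk_add {j : ℕ} (hj : 1 ≤ j) : j ≤ nn (blk j) + 10 ^ blk j := by
  by_contra! h
  have hnext : nn (blk j + 1) ≤ j := by rw [nn_succ (one_le_blk hj)]; omega
  have : blk j + 1 ≤ blk j :=
    Nat.le_findGreatest ((le_nn (by omega)).trans hnext) hnext
  omega

lemma blk_nn {k : ℕ} (hk : 1 ≤ k) : blk (nn k) = k := by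
  have hle : k ≤ blk (nn k) := Nat.le_findGreatest (le_nn hk) le_rfl
  by_contra hne
  have hlt : nn k < nn (blk (nn k)) :=
    nn_strictMonoOn (Set.mem_Ici.2 hk) (Set.mem_Ici.2 (hk.trans hle)) (by omega)
  exact (nn_blk_le (hk.trans (le_nn hk))).not_gt hlt

/-- The block `A_l` of negative entries. -/
def negBlock (l : ℕ) : Finset ℕ := Ioc (nn l) (nn l + 10 ^ l)

lemma card_negBlock (l : ℕ) : (negBlock l).card = 10 ^ l := by
  simp [negBlock]

lemma mem_negBlock_blk {j : ℕ} (hj : 1 ≤ j) (hne : ¬ j = nn (blk j)) : j ∈ negBlock (blk j) :=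
  mem_Ioc.2 ⟨(nn_blk_le hj).lt_of_ne' hne, le_nn_blk_add hj⟩

structure IsConstruction (b : ℕ → ℝ) : Prop where
  apply_nn : ∀ k : ℕ, 1 ≤ k → b (nn k) = 1 / Real.sqrt k
  apply_of_nn_lt : ∀ k : ℕ, 1 ≤ k → ∀ j : ℕ, nn k < j → j ≤ nn k + 10 ^ k →
    b j = -(1 / (10 ^ k * Real.sqrt k))

namespace IsConstruction

variable {b : ℕ → ℝ} {j : ℕ}

lemma apply_of_eq_nn_blk (hb : IsConstruction b) (hj : 1 ≤ j) (h : j = nn (blk j)) :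
    b j = 1 / Real.sqrt (blk j) := by
  conv_lhs => rw [h]
  exact hb.apply_nn _ (one_le_blk hj)

lemma apply_of_mem_negBlock (hb : IsConstruction b) {l : ℕ} (hl : 1 ≤ l) (h : j ∈ negBlock l) :
    b j = -(1 / (10 ^ l * Real.sqrt l)) :=
  hb.apply_of_nn_lt l hl j (mem_Ioc.1 h).1 (mem_Ioc.1 h).2

lemma abs_apply_of_ne_nn_blk (hb : IsConstruction b) (hj : 1 ≤ j) (h : ¬ j = nn (blk j)) :
    |b j| = 1 / (10 ^ blk j * Real.sqrt (blk j)) := by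
  rw [hb.apply_of_mem_negBlock (one_le_blk hj) (mem_negBlock_blk hj h), abs_neg,
    abs_of_nonneg (by positivity)]

lemma abs_apply_pos (hb : IsConstruction b) (hj : 1 ≤ j) : 0 < |b j| := by
  have : (0 : ℝ) < blk j := by exact_mod_cast one_le_blk hj
  by_cases h : j = nn (blk j)
  · rw [hb.apply_of_eq_nn_blk hj h]; positivity
  · rw [hb.abs_apply_of_ne_nn_blk hj h]; positivity

lemma abs_apply_le_one (hb : IsConstruction b) (hj : 1 ≤ j) : |b j| ≤ 1 := by
  have hsqrt : 1 ≤ Real.sqrt (blk j) := Real.one_le_sqrt.2 (by exact_mod_cast one_le_blk hj)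
  have hpow : (1 : ℝ) ≤ 10 ^ blk j := one_le_pow₀ (by norm_num)
  by_cases h : j = nn (blk j)
  · rw [hb.apply_of_eq_nn_blk hj h, abs_of_nonneg (by positivity)]
    exact div_le_one_of_le₀ hsqrt (by positivity)
  · rw [hb.abs_apply_of_ne_nn_blk hj h]
    exact div_le_one_of_le₀ (one_le_mul_of_one_le_of_one_le hpow hsqrt) (by positivity)

end IsConstruction

lemma sq_le_ten_pow (L : ℕ) : (L : ℝ) ^ 2 ≤ 10 ^ L := by
  have h : L ^ 2 ≤ 10 ^ L :=
    calc L ^ 2 ≤ (2 ^ L) ^ 2 := Nat.pow_le_pow_left Nat.lt_two_pow_self.le 2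
      _ = 4 ^ L := by rw [← pow_mul, mul_comm, pow_mul]; norm_num
      _ ≤ 10 ^ L := Nat.pow_le_pow_left (by norm_num) L
  exact_mod_cast h

lemma mul_le_sqrt_of_mul_ten_pow_le_one {s : ℝ} (hs : 0 ≤ s) {L : ℕ} (h : s * 10 ^ L ≤ 1) :
    s * L ≤ Real.sqrt s := by
  rw [Real.le_sqrt (by positivity) hs]
  calc (s * L) ^ 2 = s * (s * L ^ 2) := by ring
    _ ≤ s * (s * 10 ^ L) := by gcongr; exact sq_le_ten_pow L
    _ ≤ s * 1 := by gcongr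
    _ = s := mul_one s

lemma sqrt_le_sum_one_div_sqrt (K : ℕ) : Real.sqrt K ≤ ∑ k ∈ Icc 1 K, 1 / Real.sqrt k := by
  have hterm : ∀ k ∈ Icc 1 K, 1 / Real.sqrt K ≤ 1 / Real.sqrt k := fun k hk => by
    have hk := mem_Icc.1 hk
    gcongr
    · exact Real.sqrt_pos.2 (by exact_mod_cast hk.1)
    · exact_mod_cast hk.2
  calc Real.sqrt K = K • (1 / Real.sqrt K) := by rw [nsmul_eq_mul, mul_one_div, Real.div_sqrt]
    _ ≤ ∑ k ∈ Icc 1 K, 1 / Real.sqrt k := by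
      simpa using card_nsmul_le_sum (Icc 1 K) _ _ hterm

/-- The entries of `Λ` lying in the negative blocks `A_l`. -/
def negIndices (Λ : Finset ℕ) : Finset ℕ := Λ.filter fun j => ¬ j = nn (blk j)

lemma mem_negIndices {Λ : Finset ℕ} {j : ℕ} : j ∈ negIndices Λ ↔ j ∈ Λ ∧ ¬ j = nn (blk j) :=
  mem_filter

def topBlock (Λ : Finset ℕ) : ℕ := (negIndices Λ).sup blk

section Threshold

variable {b : ℕ → ℝ} {Λ : Finset ℕ} {s : ℝ}

lemma blk_mem_Icc_topBlock (hΛ : ∀ i ∈ Λ, 1 ≤ i) {j : ℕ} (hj : j ∈ negIndices Λ) :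
    blk j ∈ Icc 1 (topBlock Λ) :=
  mem_Icc.2 ⟨one_le_blk (hΛ j (mem_negIndices.1 hj).1), le_sup hj⟩

lemma card_filter_negIndices_blk_eq_le (hΛ : ∀ i ∈ Λ, 1 ≤ i) (l : ℕ) :
    ((negIndices Λ).filter (blk · = l)).card ≤ 10 ^ l := by
  rw [← card_negBlock l]
  refine card_le_card fun j hj => ?_
  obtain ⟨hjI, rfl⟩ := mem_filter.1 hj
  obtain ⟨hjΛ, hjneg⟩ := mem_negIndices.1 hjI
  exact mem_negBlock_blk (hΛ j hjΛ) hjneg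

lemma mul_ten_pow_topBlock_le_one (hb : IsConstruction b) (hΛ : ∀ i ∈ Λ, 1 ≤ i) (hs0 : 0 ≤ s)
    (hs1 : s ≤ 1) (hmin : ∀ i ∈ Λ, s ≤ |b i|) : s * 10 ^ topBlock Λ ≤ 1 := by
  rcases (negIndices Λ).eq_empty_or_nonempty with hempty | hne
  · simpa [topBlock, hempty] using hs1
  obtain ⟨j, hj, hjsup⟩ := exists_mem_eq_sup _ hne blk
  obtain ⟨hjΛ, hjneg⟩ := mem_negIndices.1 hj
  have hj1 := hΛ j hjΛ
  have hsqrt : 1 ≤ Real.sqrt (blk j) := Real.one_le_sqrt.2 (by exact_mod_cast one_le_blk hj1)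
  have hsj := hmin j hjΛ
  rw [hb.abs_apply_of_ne_nn_blk hj1 hjneg, le_div_iff₀ (by positivity)] at hsj
  rw [topBlock, hjsup]
  calc s * 10 ^ blk j ≤ s * (10 ^ blk j * Real.sqrt (blk j)) :=
        mul_le_mul_of_nonneg_left (le_mul_of_one_le_right (by positivity) hsqrt) hs0
    _ ≤ 1 := hsj

lemma sum_abs_negIndices_le_topBlock (hb : IsConstruction b) (hΛ : ∀ i ∈ Λ, 1 ≤ i) :
    ∑ j ∈ negIndices Λ, |b j| ≤ topBlock Λ := by
  rw [← sum_fiberwise_of_maps_to fun j hj => blk_mem_Icc_topBlock hΛ hj]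
  have hfiber : ∀ l ∈ Icc 1 (topBlock Λ), ∑ j ∈ (negIndices Λ).filter (blk · = l), |b j| ≤ 1 := by
    intro l hl
    have hl1 := (mem_Icc.1 hl).1
    have hsqrt : 1 ≤ Real.sqrt l := Real.one_le_sqrt.2 (by exact_mod_cast hl1)
    have hval : ∀ j ∈ (negIndices Λ).filter (blk · = l), |b j| = 1 / (10 ^ l * Real.sqrt l) := by
      intro j hj
      obtain ⟨hjI, rfl⟩ := mem_filter.1 hj
      obtain ⟨hjΛ, hjneg⟩ := mem_negIndices.1 hjI
      exact hb.abs_apply_of_ne_nn_blk (hΛ j hjΛ) hjneg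
    rw [sum_congr rfl hval, sum_const, nsmul_eq_mul]
    calc (((negIndices Λ).filter (blk · = l)).card : ℝ) * (1 / (10 ^ l * Real.sqrt l))
        ≤ 10 ^ l * (1 / (10 ^ l * Real.sqrt l)) := by
          gcongr; exact_mod_cast card_filter_negIndices_blk_eq_le hΛ l
      _ = 1 / Real.sqrt l := by field_simp
      _ ≤ 1 := div_le_one_of_le₀ hsqrt (by positivity)
  calc _ ≤ ∑ _l ∈ Icc 1 (topBlock Λ), (1 : ℝ) := sum_le_sum hfiber
    _ = topBlock Λ := by simp

lemma card_mul_sq_le (hb : IsConstruction b) (hΛ : ∀ i ∈ Λ, 1 ≤ i) (hs0 : 0 < s) (hs1 : s ≤ 1)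
    (hmin : ∀ i ∈ Λ, s ≤ |b i|) : (Λ.card : ℝ) * s ^ 2 ≤ 11 := by
  set K := ⌊1 / s ^ 2⌋₊
  have hpeaks : Λ.filter (fun j => j = nn (blk j)) ⊆ (Icc 1 K).image nn := by
    intro j hj
    obtain ⟨hjΛ, hjpeak⟩ := mem_filter.1 hj
    have hj1 := hΛ j hjΛ
    refine mem_image.2 ⟨blk j, mem_Icc.2 ⟨one_le_blk hj1, Nat.le_floor ?_⟩, hjpeak.symm⟩
    have hsj := hmin j hjΛ
    have hsqrt : 0 < Real.sqrt (blk j) := Real.sqrt_pos.2 (by exact_mod_cast one_le_blk hj1)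
    rw [hb.apply_of_eq_nn_blk hj1 hjpeak, abs_of_nonneg (by positivity),
      le_div_iff₀ hsqrt] at hsj
    rw [le_div_iff₀ (by positivity)]
    calc (blk j : ℝ) * s ^ 2 = (s * Real.sqrt (blk j)) ^ 2 := by
          rw [mul_pow, Real.sq_sqrt (by positivity)]; ring
      _ ≤ 1 := pow_le_one₀ (by positivity) hsj
  have hpeaks_card : (Λ.filter fun j => j = nn (blk j)).card ≤ K :=
    (card_le_card hpeaks).trans (card_image_le.trans (by simp))
  have hneg_card : (negIndices Λ).card < 10 ^ (topBlock Λ + 1) := by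
    rw [card_eq_sum_card_fiberwise fun j hj => blk_mem_Icc_topBlock hΛ hj]
    calc _ ≤ ∑ l ∈ Icc 1 (topBlock Λ), 10 ^ l :=
          sum_le_sum fun l _ => card_filter_negIndices_blk_eq_le hΛ l
      _ < 10 ^ (topBlock Λ + 1) :=
          Nat.geomSum_lt (by norm_num) fun l hl => Nat.lt_succ_of_le (mem_Icc.1 hl).2
  have hcard : Λ.card ≤ K + 10 * 10 ^ topBlock Λ := by
    rw [← card_filter_add_card_filter_not fun j => j = nn (blk j)]
    rw [pow_succ] at hneg_card
    unfold negIndices at hneg_card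
    omega
  have hK : (K : ℝ) * s ^ 2 ≤ 1 := by
    rw [← le_div_iff₀ (by positivity)]; exact Nat.floor_le (by positivity)
  have hL := mul_ten_pow_topBlock_le_one hb hΛ hs0.le hs1 hmin
  calc (Λ.card : ℝ) * s ^ 2 ≤ (K + 10 * 10 ^ topBlock Λ) * s ^ 2 := by
        gcongr; exact_mod_cast hcard
    _ = K * s ^ 2 + 10 * (s * 10 ^ topBlock Λ) * s := by ring
    _ ≤ 1 + 10 * 1 * 1 := by gcongr
    _ = 11 := by norm_num

end Threshold

section PartialSums

variable {b : ℕ → ℝ} {Λ : Finset ℕ}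

lemma nn_mem_of_mul_sqrt_lt (hb : IsConstruction b) {s t : ℝ}
    (hout : ∀ j : ℕ, 1 ≤ j → j ∉ Λ → t * |b j| ≤ s) {k : ℕ} (hk : 1 ≤ k)
    (h : s * Real.sqrt k < t) : nn k ∈ Λ := by
  by_contra hnot
  have hsk := hout (nn k) (hk.trans (le_nn hk)) hnot
  rw [hb.apply_nn k hk, abs_of_nonneg (by positivity), mul_one_div,
    div_le_iff₀ (Real.sqrt_pos.2 (by exact_mod_cast hk))] at hsk
  linarith

lemma sqrt_sub_le_sum_filter_le_nn (hb : IsConstruction b) (hΛ : ∀ i ∈ Λ, 1 ≤ i) {K : ℕ}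
    (hK : ∀ k ∈ Icc 1 K, nn k ∈ Λ) :
    Real.sqrt K - ∑ j ∈ negIndices Λ, |b j| ≤ ∑ i ∈ Λ.filter (· ≤ nn K), b i := by
  set Λ' := Λ.filter (· ≤ nn K)
  rw [← sum_filter_add_sum_filter_not Λ' fun j => j = nn (blk j)]
  have hsub : (Icc 1 K).image nn ⊆ Λ'.filter fun j => j = nn (blk j) := by
    intro j hj
    obtain ⟨k, hk, rfl⟩ := mem_image.1 hj
    have hk' := mem_Icc.1 hk
    refine mem_filter.2 ⟨mem_filter.2 ⟨hK k hk, ?_⟩, by rw [blk_nn hk'.1]⟩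
    exact nn_strictMonoOn.monotoneOn (Set.mem_Ici.2 hk'.1) (Set.mem_Ici.2 (hk'.1.trans hk'.2)) hk'.2
  have hpeaks : Real.sqrt K ≤ ∑ j ∈ Λ'.filter (fun j => j = nn (blk j)), b j :=
    calc Real.sqrt K ≤ ∑ k ∈ Icc 1 K, 1 / Real.sqrt k := sqrt_le_sum_one_div_sqrt K
      _ = ∑ j ∈ (Icc 1 K).image nn, b j := by
        rw [sum_image fun k hk l hl => nn_strictMonoOn.injOn
          (Set.mem_Ici.2 (mem_Icc.1 hk).1) (Set.mem_Ici.2 (mem_Icc.1 hl).1)]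
        exact sum_congr rfl fun k hk => (hb.apply_nn k (mem_Icc.1 hk).1).symm
      _ ≤ _ := sum_le_sum_of_subset_of_nonneg hsub fun j hj _ => by
        obtain ⟨hj', hpeak⟩ := mem_filter.1 hj
        rw [hb.apply_of_eq_nn_blk (hΛ j (mem_filter.1 hj').1) hpeak]
        positivity
  have hnegs : -∑ j ∈ negIndices Λ, |b j| ≤ ∑ j ∈ Λ'.filter (fun j => ¬ j = nn (blk j)), b j :=
    calc -∑ j ∈ negIndices Λ, |b j| ≤ -∑ j ∈ Λ'.filter (fun j => ¬ j = nn (blk j)), |b j| :=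
          neg_le_neg (sum_le_sum_of_subset_of_nonneg (filter_subset_filter _ (filter_subset _ _))
            fun _ _ _ => abs_nonneg _)
      _ ≤ _ := by rw [← sum_neg_distrib]; exact sum_le_sum fun j _ => neg_abs_le (b j)
  linarith

lemma exists_lt_sum_filter (hb : IsConstruction b) (hΛ : ∀ i ∈ Λ, 1 ≤ i) {s t R : ℝ}
    (hs0 : 0 < s) (hs1 : s ≤ 1) (hmin : ∀ i ∈ Λ, s ≤ |b i|)
    (hout : ∀ j : ℕ, 1 ≤ j → j ∉ Λ → t * |b j| ≤ s) (hR : 0 < R)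
    (hsmall : (R + 2) * Real.sqrt s < t) :
    ∃ N : ℕ, R < ∑ i ∈ Λ.filter (· ≤ N + 1), b i := by
  set μ := ∑ j ∈ negIndices Λ, |b j|
  have hμ : s * μ ≤ Real.sqrt s :=
    (mul_le_mul_of_nonneg_left (sum_abs_negIndices_le_topBlock hb hΛ) hs0.le).trans
      (mul_le_sqrt_of_mul_ten_pow_le_one hs0.le
        (mul_ten_pow_topBlock_le_one hb hΛ hs0.le hs1 hmin))
  -- all peaks `n_k` with `k ≤ P ^ 2` lie in `Λ`, and they outweigh the negative entries by `R`
  set P := ⌊R + μ⌋₊ + 1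
  have hP : R + μ < P := by simpa [P] using Nat.lt_floor_add_one (R + μ)
  have hsP : s * P < t := by
    have hs_le : s ≤ Real.sqrt s := Real.le_sqrt_of_sq_le (by nlinarith)
    have hPle : (P : ℝ) ≤ R + μ + 1 := by
      have := Nat.floor_le (show 0 ≤ R + μ by positivity)
      push_cast [P]; linarith
    calc s * P ≤ s * (R + μ + 1) := mul_le_mul_of_nonneg_left hPle hs0.le
      _ = s * (R + 1) + s * μ := by ring
      _ ≤ Real.sqrt s * (R + 1) + Real.sqrt s := by gcongr
      _ = (R + 2) * Real.sqrt s := by ring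
      _ < t := hsmall
  have hK : ∀ k ∈ Icc 1 (P ^ 2), nn k ∈ Λ := fun k hk =>
    nn_mem_of_mul_sqrt_lt hb hout (mem_Icc.1 hk).1 <|
      calc s * Real.sqrt k ≤ s * Real.sqrt ((P ^ 2 : ℕ) : ℝ) := by
            gcongr; exact_mod_cast (mem_Icc.1 hk).2
        _ = s * P := by rw [Nat.cast_pow, Real.sqrt_sq (Nat.cast_nonneg _)]
        _ < t := hsP
  have hP1 : 1 ≤ P ^ 2 := Nat.one_le_pow _ _ (Nat.succ_pos _)
  have hnn : 1 ≤ nn (P ^ 2) := hP1.trans (le_nn hP1)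
  refine ⟨nn (P ^ 2) - 1, ?_⟩
  have hsum := sqrt_sub_le_sum_filter_le_nn hb hΛ hK
  rw [Nat.cast_pow, Real.sqrt_sq (Nat.cast_nonneg _)] at hsum
  rw [Nat.sub_add_cancel hnn]
  linarith

end PartialSums

lemma lt_iSup_abs_sum_filter_of_lt {f : ℕ → ℝ} {Λ : Finset ℕ} {R : ℝ} {N : ℕ}
    (h : R < ∑ i ∈ Λ.filter (· ≤ N + 1), f i) :
    R < ⨆ N : ℕ, |∑ i ∈ Λ.filter (fun i => i ≤ N + 1), f i| := by
  have hbdd : BddAbove (Set.range fun N : ℕ => |∑ i ∈ Λ.filter (fun i => i ≤ N + 1), f i|) := by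
    refine ⟨∑ i ∈ Λ, |f i|, ?_⟩
    rintro _ ⟨N, rfl⟩
    exact (abs_sum_le_sum_abs _ _).trans
      (sum_le_sum_of_subset_of_nonneg (filter_subset _ _) fun _ _ _ => abs_nonneg _)
  exact h.trans_le ((le_abs_self _).trans (le_ciSup hbdd N))

/-- For the element `b` of the construction, for every weakness parameter
`t ∈ (0,1]` the quantity `inf { sup_{N ≥ 1} |∑_{i ∈ Λ, i ≤ N} b_i| : Λ a
t-greedy set for b of cardinality m }` tends to `+∞` as `m → ∞`: every
sequence of weak greedy sums of `b` diverges in norm. -/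
theorem stmt_4 (b : ℕ → ℝ)
    (hb1 : ∀ k : ℕ, 1 ≤ k → b (nn k) = 1 / Real.sqrt k)
    (hb2 : ∀ k : ℕ, 1 ≤ k → ∀ j : ℕ, nn k < j → j ≤ nn k + 10 ^ k →
      b j = -(1 / (10 ^ k * Real.sqrt k))) :
    ∀ t : ℝ, 0 < t → t ≤ 1 → ∀ R : ℝ, 0 < R → ∃ m₀ : ℕ, ∀ m : ℕ, m₀ ≤ m →
      ∀ Λ : Finset ℕ, (∀ i ∈ Λ, 1 ≤ i) → Λ.card = m →
        (∀ i ∈ Λ, ∀ j : ℕ, 1 ≤ j → j ∉ Λ → t * |b j| ≤ |b i|) →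
        R < ⨆ N : ℕ, |∑ i ∈ Λ.filter (fun i => i ≤ N + 1), b i| := by
  intro t ht0 _ R hR
  have hb : IsConstruction b := ⟨hb1, hb2⟩
  refine ⟨⌊11 * (R + 2) ^ 4 / t ^ 4⌋₊ + 1, fun m hm Λ hΛ hcard hgreedy => ?_⟩
  obtain ⟨i₀, hi₀, hmin⟩ := exists_min_image Λ (fun i => |b i|) (card_pos.1 (by omega))
  set s := |b i₀|
  have hs0 : 0 < s := hb.abs_apply_pos (hΛ i₀ hi₀)
  have hs1 : s ≤ 1 := hb.abs_apply_le_one (hΛ i₀ hi₀)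
  have hsmall : (R + 2) * Real.sqrt s < t := by
    have hm' : 11 * (R + 2) ^ 4 / t ^ 4 < m :=
      (Nat.lt_floor_add_one _).trans_le (by exact_mod_cast hm)
    have hms : (m : ℝ) * s ^ 2 ≤ 11 := hcard ▸ card_mul_sq_le hb hΛ hs0 hs1 hmin
    rw [div_lt_iff₀ (by positivity)] at hm'
    rw [← pow_lt_pow_iff_left₀ (by positivity) ht0.le four_ne_zero,
      show ((R + 2) * Real.sqrt s) ^ 4 = (R + 2) ^ 4 * s ^ 2 by
        rw [mul_pow, show 4 = 2 * 2 from rfl, pow_mul (Real.sqrt s), Real.sq_sqrt hs0.le]]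
    nlinarith [pow_pos ht0 4, pow_pos (show 0 < R + 2 by linarith) 4, sq_nonneg s]
  obtain ⟨N, hN⟩ := exists_lt_sum_filter hb hΛ hs0 hs1 hmin
    (fun j hj hj' => hgreedy i₀ hi₀ j hj hj') hR hsmall
  exact lt_iSup_abs_sum_filter_of_lt hN
end

section
/- Let X be a real Banach space with a semi-normalized Markushevich basis (e_i, e*_i) which is a Schauder basis with basis constant K, let t ∈ (0,1], and let n = (n_k) be a strictly increasing sequence of positive integers having l-bounded gaps for some integer l ≥ 2, i.e. n_{k+1} ≤ l·n_k for all k. Suppose the basis is C-n-t-quasi-greedy. Then the basis is quasi-greedy: for every x ∈ X and every greedy set A for x (of any finite cardinality), ‖P_A(x)‖ ≤ max{ n_1·α_1·α_2 , 2·C·K·(l − 1 + K) }·‖x‖. -/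
/-!
Let `n_k ≤ |A| < n_{k+1} ≤ l n_k` and `c = ⌊|A| / n_k⌋ ≤ l - 1`. Cut `A`, by index, into `c` top
blocks of `n_k` consecutive elements and a remainder `R = A ∩ [0, q)` with `|R| < n_k`. A block
`A ∩ [p, q)` is a greedy set for `S_q x - S_p x`, which has norm at most `2K‖x‖`, so each block
costs `2CK‖x‖`. For the remainder, add to `R` the `n_k - |R|` largest coefficients of `A` beyond `q`
to get a set `Γ` of size `n_k`, and damp the coordinates beyond `q` by a factor `δ ∈ [0, 1]`:
`Γ` is greedy for `z = (1 - δ) S_q x + δ S_N x`, `‖z‖ ≤ K‖x‖`, and `P_R x = S_q P_Γ z`, so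
`‖P_R x‖ ≤ CK²‖x‖`. Sets of size at most `n_1` are bounded term by term.
-/

open Finset

/-- Coordinate projection `P_A x = ∑_{i ∈ A} e*_i(x) • e_i`. -/
noncomputable def proj {X : Type*} [NormedAddCommGroup X] [NormedSpace ℝ X]
    (e : ℕ → X) (f : ℕ → X →L[ℝ] ℝ) (A : Finset ℕ) (x : X) : X :=
  ∑ i ∈ A, f i x • e i

/-- `A` is a `t`-greedy set for `x`:
`min_{i ∈ A} |e*_i(x)| ≥ t · sup_{j ∉ A} |e*_j(x)|`. -/
def IsGreedySet {X : Type*} [NormedAddCommGroup X] [NormedSpace ℝ X]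
    (f : ℕ → X →L[ℝ] ℝ) (t : ℝ) (x : X) (A : Finset ℕ) : Prop :=
  ∀ i ∈ A, ∀ j ∉ A, t * |f j x| ≤ |f i x|

theorem Finset.exists_card_filter_ge_eq (A : Finset ℕ) {v : ℕ} (hv : v ≤ #A) :
    ∃ q, #(A.filter (q ≤ ·)) = v := by
  induction A using Finset.induction_on_min generalizing v with
  | empty => exact ⟨0, by simp_all⟩
  | insert a s ha ih =>
    rw [card_insert_of_notMem fun h => lt_irrefl a (ha a h)] at hv
    rcases hv.lt_or_eq with hv | rfl
    · obtain ⟨q, hq⟩ := ih (Nat.lt_succ_iff.mp hv)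
      refine ⟨max q (a + 1), ?_⟩
      rw [filter_insert, if_neg (by omega), ← hq]
      congr 1
      refine filter_congr fun b hb => ?_
      have := ha b hb
      omega
    · refine ⟨a, ?_⟩
      rw [filter_true_of_mem fun b hb => ?_, card_insert_of_notMem fun h => lt_irrefl a (ha a h)]
      rcases mem_insert.mp hb with rfl | hb
      · exact le_rfl
      · exact (ha b hb).le

theorem Finset.card_filter_lt_add_card_filter_ge (A : Finset ℕ) (q : ℕ) :
    #(A.filter (· < q)) + #(A.filter (q ≤ ·)) = #A := by
  simpa only [not_lt] using card_filter_add_card_filter_not (s := A) (· < q)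

theorem Finset.exists_subset_card_eq_forall_mem_sdiff_le {β : Type*} [LinearOrder β] (g : ℕ → β)
    {s : Finset ℕ} {d : ℕ} (hd : d ≤ #s) :
    ∃ u ⊆ s, #u = d ∧ ∀ i ∈ u, ∀ j ∈ s \ u, g j ≤ g i := by
  induction d generalizing s with
  | zero => exact ⟨∅, empty_subset s, card_empty, by simp⟩
  | succ d ih =>
    obtain ⟨i₀, hi₀, hmax⟩ := s.exists_max_image g (card_pos.mp (by omega))
    obtain ⟨u, hus, hu, hutop⟩ := ih (s := s.erase i₀) (by rw [card_erase_of_mem hi₀]; omega)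
    have hi₀u : i₀ ∉ u := fun h => (mem_erase.mp (hus h)).1 rfl
    refine ⟨insert i₀ u, insert_subset hi₀ (hus.trans (erase_subset _ _)), ?_, ?_⟩
    · rw [card_insert_of_notMem hi₀u, hu]
    · intro i hi j hj
      rw [mem_sdiff, mem_insert, not_or] at hj
      obtain ⟨hj, hju⟩ := hj
      rcases mem_insert.mp hi with rfl | hi
      · exact hmax j hj
      · exact hutop i hi j (mem_sdiff.mpr ⟨mem_erase.mpr ⟨hju.1, hj⟩, hju.2⟩)

section MarkushevichBasis

variable {X : Type*} [NormedAddCommGroup X] [NormedSpace ℝ X] {e : ℕ → X} {f : ℕ → X →L[ℝ] ℝ}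
  {K C t : ℝ} {s : ℕ}

theorem apply_proj (hbio : ∀ k i, f k (e i) = if k = i then 1 else 0) (B : Finset ℕ) (x : X)
    (j : ℕ) : f j (proj e f B x) = if j ∈ B then f j x else 0 := by
  simp only [proj, map_sum, map_smul, hbio, smul_eq_mul, mul_ite, mul_one, mul_zero]
  exact sum_ite_eq B j _

theorem proj_proj (hbio : ∀ k i, f k (e i) = if k = i then 1 else 0) (B B' : Finset ℕ) (x : X) :
    proj e f B (proj e f B' x) = proj e f (B ∩ B') x := by
  change ∑ i ∈ B, f i (proj e f B' x) • e i = ∑ i ∈ B ∩ B', f i x • e i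
  simp only [apply_proj hbio, ite_smul, zero_smul, sum_ite_mem]

theorem proj_congr {B : Finset ℕ} {x y : X} (h : ∀ i ∈ B, f i y = f i x) :
    proj e f B y = proj e f B x :=
  sum_congr rfl fun i hi => by rw [h i hi]

theorem proj_filter_lt_add_proj_filter_ge (A : Finset ℕ) (q : ℕ) (x : X) :
    proj e f (A.filter (· < q)) x + proj e f (A.filter (q ≤ ·)) x = proj e f A x := by
  simp only [proj, ← not_lt]
  exact sum_filter_add_sum_filter_not A _ _

theorem norm_proj_le_card_mul {a b : ℝ} (he : ∀ i, ‖e i‖ ≤ a) (hf : ∀ i, ‖f i‖ ≤ b)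
    (A : Finset ℕ) (x : X) : ‖proj e f A x‖ ≤ #A * a * b * ‖x‖ := by
  have hterm : ∀ i ∈ A, ‖f i x • e i‖ ≤ b * ‖x‖ * a := fun i _ => by
    rw [norm_smul]
    exact mul_le_mul ((f i).le_opNorm x |>.trans (by gcongr; exact hf i)) (he i) (norm_nonneg _)
      (mul_nonneg ((norm_nonneg _).trans (hf i)) (norm_nonneg x))
  calc ‖proj e f A x‖ ≤ ∑ i ∈ A, ‖f i x • e i‖ := norm_sum_le _ _
    _ ≤ #A * (b * ‖x‖ * a) := by simpa using sum_le_card_nsmul _ _ _ hterm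
    _ = #A * a * b * ‖x‖ := by ring

theorem IsGreedySet.mono {t t' : ℝ} {x : X} {A : Finset ℕ} (h : IsGreedySet f t' x A)
    (htt' : t ≤ t') : IsGreedySet f t x A := fun i hi j hj =>
  (mul_le_mul_of_nonneg_right htt' (abs_nonneg _)).trans (h i hi j hj)

theorem isGreedySet_one_of_le_of_le {x : X} {A : Finset ℕ} (v : ℝ) (hin : ∀ i ∈ A, v ≤ |f i x|)
    (hout : ∀ j ∉ A, |f j x| ≤ v) : IsGreedySet f 1 x A := fun i hi j hj => by
  rw [one_mul]
  exact (hout j hj).trans (hin i hi)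

theorem IsGreedySet.inter_proj (hbio : ∀ k i, f k (e i) = if k = i then 1 else 0)
    {x : X} {A : Finset ℕ} (hA : IsGreedySet f 1 x A) (B : Finset ℕ) :
    IsGreedySet f 1 (proj e f B x) (A ∩ B) := fun i hi j hj => by
  rw [mem_inter] at hi hj
  rw [apply_proj hbio, apply_proj hbio, if_pos hi.2]
  split_ifs with hjB
  · exact hA i hi.1 j (fun hjA => hj ⟨hjA, hjB⟩)
  · simp

theorem isGreedySet_one_basis (hbio : ∀ k i, f k (e i) = if k = i then 1 else 0)
    {A : Finset ℕ} {i : ℕ} (hi : i ∈ A) : IsGreedySet f 1 (e i) A :=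
  isGreedySet_one_of_le_of_le 0 (fun _ _ => abs_nonneg _) fun j hj => by
    rw [hbio, if_neg (ne_of_mem_of_not_mem hi hj).symm, abs_zero]

theorem norm_proj_Ico_le (hS : ∀ (x : X) (m : ℕ), ‖proj e f (range m) x‖ ≤ K * ‖x‖) {p q : ℕ}
    (hpq : p ≤ q) (x : X) : ‖proj e f (Ico p q) x‖ ≤ 2 * K * ‖x‖ := by
  rw [proj, sum_Ico_eq_sub _ hpq]
  change ‖proj e f (range q) x - proj e f (range p) x‖ ≤ _
  linarith [norm_sub_le (proj e f (range q) x) (proj e f (range p) x), hS x p, hS x q]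

theorem norm_convex_comb_proj_range_le (hS : ∀ (x : X) (m : ℕ), ‖proj e f (range m) x‖ ≤ K * ‖x‖)
    {δ : ℝ} (hδ0 : 0 ≤ δ) (hδ1 : δ ≤ 1) (p q : ℕ) (x : X) :
    ‖(1 - δ) • proj e f (range p) x + δ • proj e f (range q) x‖ ≤ K * ‖x‖ := by
  calc _ ≤ (1 - δ) * ‖proj e f (range p) x‖ + δ * ‖proj e f (range q) x‖ := by
        refine (norm_add_le _ _).trans_eq ?_
        rw [norm_smul, norm_smul, Real.norm_of_nonneg (by linarith), Real.norm_of_nonneg hδ0]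
    _ ≤ (1 - δ) * (K * ‖x‖) + δ * (K * ‖x‖) := by
        gcongr
        · exact hS x p
        · exact hS x q
    _ = K * ‖x‖ := by ring

theorem norm_proj_inter_Ico_le (hbio : ∀ k i, f k (e i) = if k = i then 1 else 0)
    (hS : ∀ (x : X) (m : ℕ), ‖proj e f (range m) x‖ ≤ K * ‖x‖)
    (hq : ∀ (y : X) (B : Finset ℕ), IsGreedySet f t y B → #B = s → ‖proj e f B y‖ ≤ C * ‖y‖)
    (hC : 0 ≤ C) (ht : t ≤ 1) {x : X} {A : Finset ℕ} (hA : IsGreedySet f 1 x A) {p q : ℕ}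
    (hpq : p ≤ q) (hcard : #(A ∩ Ico p q) = s) :
    ‖proj e f (A ∩ Ico p q) x‖ ≤ 2 * C * K * ‖x‖ := by
  have hproj : proj e f (A ∩ Ico p q) (proj e f (Ico p q) x) = proj e f (A ∩ Ico p q) x := by
    rw [proj_proj hbio, inter_assoc, inter_self]
  calc _ ≤ C * ‖proj e f (Ico p q) x‖ := hproj ▸ hq _ _ ((hA.inter_proj hbio _).mono ht) hcard
    _ ≤ C * (2 * K * ‖x‖) := by gcongr; exact norm_proj_Ico_le hS hpq x
    _ = 2 * C * K * ‖x‖ := by ring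

theorem norm_proj_filter_ge_le_of_card_eq_mul (hbio : ∀ k i, f k (e i) = if k = i then 1 else 0)
    (hS : ∀ (x : X) (m : ℕ), ‖proj e f (range m) x‖ ≤ K * ‖x‖)
    (hq : ∀ (y : X) (B : Finset ℕ), IsGreedySet f t y B → #B = s → ‖proj e f B y‖ ≤ C * ‖y‖)
    (hC : 0 ≤ C) (ht : t ≤ 1) (hs : 0 < s) {x : X} {A : Finset ℕ} (hA : IsGreedySet f 1 x A)
    (c : ℕ) {q : ℕ} (hcard : #(A.filter (q ≤ ·)) = c * s) :
    ‖proj e f (A.filter (q ≤ ·)) x‖ ≤ c * (2 * C * K * ‖x‖) := by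
  induction c generalizing q with
  | zero =>
    rw [zero_mul, card_eq_zero] at hcard
    simp [hcard, proj]
  | succ c ih =>
    obtain ⟨q', hq'⟩ := A.exists_card_filter_ge_eq (v := c * s) (by
      have := card_filter_le A (q ≤ ·)
      nlinarith)
    have hqq' : q ≤ q' := by
      by_contra! h
      have := card_le_card (monotone_filter_right A fun i _ (hi : q ≤ i) => h.le.trans hi)
      nlinarith
    have hsplit : A.filter (q ≤ ·) = A ∩ Ico q q' ∪ A.filter (q' ≤ ·) := by
      ext i
      simp only [mem_filter, mem_union, mem_inter, mem_Ico]
      by_cases hi : i ∈ A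
      · simp only [hi, true_and]
        omega
      · simp [hi]
    have hdisj : Disjoint (A ∩ Ico q q') (A.filter (q' ≤ ·)) := by
      refine disjoint_left.mpr fun i hi hi' => ?_
      rw [mem_inter, mem_Ico] at hi
      rw [mem_filter] at hi'
      omega
    have hblock : #(A ∩ Ico q q') = s := by
      have := card_union_of_disjoint hdisj
      rw [← hsplit, hcard, hq'] at this
      linarith
    rw [hsplit, proj, sum_union hdisj]
    calc _ ≤ ‖proj e f (A ∩ Ico q q') x‖ + ‖proj e f (A.filter (q' ≤ ·)) x‖ := norm_add_le _ _
      _ ≤ 2 * C * K * ‖x‖ + c * (2 * C * K * ‖x‖) :=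
          add_le_add (norm_proj_inter_Ico_le hbio hS hq hC ht hA hqq' hblock) (ih hq')
      _ = (c + 1 : ℕ) * (2 * C * K * ‖x‖) := by push_cast; ring

theorem apply_convex_comb_proj_range (hbio : ∀ k i, f k (e i) = if k = i then 1 else 0)
    (δ : ℝ) {p q : ℕ} (hpq : p ≤ q) (x : X) (j : ℕ) :
    f j ((1 - δ) • proj e f (range p) x + δ • proj e f (range q) x) =
      if j < p then f j x else if j < q then δ * f j x else 0 := by
  simp only [map_add, map_smul, apply_proj hbio, mem_range, smul_eq_mul]
  split_ifs <;> first | omega | ring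

theorem exists_mul_eq_of_le {v w : ℝ} (hv : 0 ≤ v) (hvw : v ≤ w) :
    ∃ δ, 0 ≤ δ ∧ δ ≤ 1 ∧ δ * w = v :=
  ⟨v / w, div_nonneg hv (hv.trans hvw), div_le_one_of_le₀ hvw (hv.trans hvw),
    div_mul_cancel_of_imp fun hw => le_antisymm (hw ▸ hvw) hv⟩

theorem isGreedySet_filter_lt_union (hbio : ∀ k i, f k (e i) = if k = i then 1 else 0)
    {x : X} {A Γ' : Finset ℕ} (hA : IsGreedySet f 1 x A) (hAne : A.Nonempty) {q N : ℕ}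
    (hqN : q ≤ N) (hAN : ∀ a ∈ A, a < N) (hΓ'T : Γ' ⊆ A.filter (q ≤ ·)) (hΓ'ne : Γ'.Nonempty)
    (hΓ'top : ∀ i ∈ Γ', ∀ j ∈ A.filter (q ≤ ·) \ Γ', |f j x| ≤ |f i x|) {δ : ℝ} (hδ0 : 0 ≤ δ)
    (hδw : δ * Γ'.inf' hΓ'ne (|f · x|) = A.inf' hAne (|f · x|)) :
    IsGreedySet f 1 ((1 - δ) • proj e f (range q) x + δ • proj e f (range N) x)
      (A.filter (· < q) ∪ Γ') := by
  have hz := apply_convex_comb_proj_range hbio δ hqN x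
  have hout : ∀ j ∉ A, ∀ a ∈ A, |f j x| ≤ |f a x| := fun j hj a ha => by
    simpa using hA a ha j hj
  refine isGreedySet_one_of_le_of_le (A.inf' hAne (|f · x|)) (fun i hi => ?_) (fun j hj => ?_)
  · rcases mem_union.mp hi with hiR | hiΓ'
    · rw [hz, if_pos (mem_filter.mp hiR).2]
      exact inf'_le _ (mem_filter.mp hiR).1
    · obtain ⟨hiA, hqi⟩ := mem_filter.mp (hΓ'T hiΓ')
      rw [hz, if_neg (by omega), if_pos (hAN i hiA), abs_mul, abs_of_nonneg hδ0, ← hδw]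
      exact mul_le_mul_of_nonneg_left (inf'_le _ hiΓ') hδ0
  · rw [mem_union, not_or] at hj
    rw [hz]
    split_ifs with hjq hjN
    · exact le_inf' _ _ fun a ha => hout j (fun hjA => hj.1 (mem_filter.mpr ⟨hjA, hjq⟩)) a ha
    · rw [abs_mul, abs_of_nonneg hδ0, ← hδw]
      refine mul_le_mul_of_nonneg_left (le_inf' _ _ fun a ha => ?_) hδ0
      by_cases hjA : j ∈ A
      · exact hΓ'top a ha j (mem_sdiff.mpr ⟨mem_filter.mpr ⟨hjA, by omega⟩, hj.2⟩)
      · exact hout j hjA a (mem_filter.mp (hΓ'T ha)).1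
    · rw [abs_zero]
      exact le_inf' hAne _ fun _ _ => abs_nonneg _

theorem exists_isGreedySet_proj_range_proj_eq (hbio : ∀ k i, f k (e i) = if k = i then 1 else 0)
    (hS : ∀ (x : X) (m : ℕ), ‖proj e f (range m) x‖ ≤ K * ‖x‖) {x : X} {A : Finset ℕ}
    (hA : IsGreedySet f 1 x A) {q : ℕ} (hR : #(A.filter (· < q)) < s) (hs : s ≤ #A) :
    ∃ z Γ, ‖z‖ ≤ K * ‖x‖ ∧ IsGreedySet f 1 z Γ ∧ #Γ = s ∧
      proj e f (range q) (proj e f Γ z) = proj e f (A.filter (· < q)) x := by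
  set R := A.filter (· < q)
  have hRT : #R + #(A.filter (q ≤ ·)) = #A := A.card_filter_lt_add_card_filter_ge q
  obtain ⟨Γ', hΓ'T, hΓ'card, hΓ'top⟩ :=
    (A.filter (q ≤ ·)).exists_subset_card_eq_forall_mem_sdiff_le (fun j => |f j x|)
      (d := s - #R) (by omega)
  have hΓ'ne : Γ'.Nonempty := card_pos.mp (by omega)
  have hΓ'A : Γ' ⊆ A := hΓ'T.trans (filter_subset _ _)
  have hAne : A.Nonempty := hΓ'ne.mono hΓ'A
  obtain ⟨δ, hδ0, hδ1, hδw⟩ := exists_mul_eq_of_le (le_inf' hAne _ fun _ _ => abs_nonneg _)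
    (inf'_mono (|f · x|) hΓ'A hΓ'ne)
  set N := A.sup id + 1
  have hAN : ∀ a ∈ A, a < N := fun a ha => Nat.lt_succ_of_le (le_sup (f := id) ha)
  have hqN : q ≤ N := by
    obtain ⟨a, ha⟩ := hΓ'ne
    have := mem_filter.mp (hΓ'T ha)
    exact this.2.trans (hAN a this.1).le
  have hdisj : Disjoint R Γ' := disjoint_left.mpr fun i hiR hiΓ' => by
    have := (mem_filter.mp (hΓ'T hiΓ')).2
    have := (mem_filter.mp hiR).2
    omega
  refine ⟨_, R ∪ Γ', norm_convex_comb_proj_range_le hS hδ0 hδ1 q N x,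
    isGreedySet_filter_lt_union hbio hA hAne hqN hAN hΓ'T hΓ'ne hΓ'top hδ0 hδw, ?_, ?_⟩
  · rw [card_union_of_disjoint hdisj]
    omega
  · have hRΓ : range q ∩ (R ∪ Γ') = R := by
      ext i
      simp only [mem_inter, mem_range, mem_union]
      constructor
      · rintro ⟨hiq, hiR | hiΓ'⟩
        · exact hiR
        · exact absurd (mem_filter.mp (hΓ'T hiΓ')).2 (by omega)
      · exact fun hiR => ⟨(mem_filter.mp hiR).2, Or.inl hiR⟩
    rw [proj_proj hbio, hRΓ]
    exact proj_congr fun i hi => by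
      rw [apply_convex_comb_proj_range hbio δ hqN, if_pos (mem_filter.mp hi).2]

theorem norm_proj_filter_lt_le_of_card_lt (hbio : ∀ k i, f k (e i) = if k = i then 1 else 0)
    (hS : ∀ (x : X) (m : ℕ), ‖proj e f (range m) x‖ ≤ K * ‖x‖)
    (hq : ∀ (y : X) (B : Finset ℕ), IsGreedySet f t y B → #B = s → ‖proj e f B y‖ ≤ C * ‖y‖)
    (hC : 0 ≤ C) (hK : 0 ≤ K) (ht : t ≤ 1) {x : X} {A : Finset ℕ} (hA : IsGreedySet f 1 x A)
    {q : ℕ} (hR : #(A.filter (· < q)) < s) (hs : s ≤ #A) :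
    ‖proj e f (A.filter (· < q)) x‖ ≤ C * K * K * ‖x‖ := by
  obtain ⟨z, Γ, hz, hΓ, hΓcard, hproj⟩ := exists_isGreedySet_proj_range_proj_eq hbio hS hA hR hs
  calc _ = ‖proj e f (range q) (proj e f Γ z)‖ := by rw [hproj]
    _ ≤ K * (C * ‖z‖) := (hS _ q).trans (by gcongr; exact hq z Γ (hΓ.mono ht) hΓcard)
    _ ≤ K * (C * (K * ‖x‖)) := by gcongr
    _ = C * K * K * ‖x‖ := by ring

theorem norm_proj_le_of_card_ge (hbio : ∀ k i, f k (e i) = if k = i then 1 else 0)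
    (hS : ∀ (x : X) (m : ℕ), ‖proj e f (range m) x‖ ≤ K * ‖x‖)
    (hq : ∀ (y : X) (B : Finset ℕ), IsGreedySet f t y B → #B = s → ‖proj e f B y‖ ≤ C * ‖y‖)
    (hC : 0 ≤ C) (hK : 0 ≤ K) (ht : t ≤ 1) (hs : 0 < s) {x : X} {A : Finset ℕ}
    (hA : IsGreedySet f 1 x A) (hsA : s ≤ #A) :
    ‖proj e f A x‖ ≤ (C * K * K + (#A / s : ℕ) * (2 * C * K)) * ‖x‖ := by
  have hdiv : #A / s * s + #A % s = #A := Nat.div_add_mod' _ _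
  have hmod := Nat.mod_lt (#A) hs
  obtain ⟨q, hq'⟩ := A.exists_card_filter_ge_eq (v := #A / s * s) (Nat.div_mul_le_self _ _)
  have hRT := A.card_filter_lt_add_card_filter_ge q
  rw [← proj_filter_lt_add_proj_filter_ge A q x]
  calc _ ≤ C * K * K * ‖x‖ + (#A / s : ℕ) * (2 * C * K * ‖x‖) :=
        (norm_add_le _ _).trans (add_le_add
          (norm_proj_filter_lt_le_of_card_lt hbio hS hq hC hK ht hA (by omega) hsA)
          (norm_proj_filter_ge_le_of_card_eq_mul hbio hS hq hC ht hs hA _ hq'))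
    _ = _ := by ring

end MarkushevichBasis

theorem stmt_6_general {X : Type*} [NormedAddCommGroup X] [NormedSpace ℝ X]
    (e : ℕ → X) (f : ℕ → X →L[ℝ] ℝ)
    (hbio : ∀ k i, f k (e i) = if k = i then 1 else 0)
    (hb1 : BddAbove (Set.range fun i => ‖e i‖))
    (hb2 : BddAbove (Set.range fun i => ‖f i‖))
    (K : ℝ)
    (hSchauder : ∀ (x : X) (m : ℕ), ‖∑ i ∈ Finset.range m, f i x • e i‖ ≤ K * ‖x‖)
    (t : ℝ) (ht1 : t ≤ 1)
    (n : ℕ → ℕ) (hn : StrictMono n) (hnpos : ∀ k, 0 < n k)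
    (l : ℕ) (hgaps : ∀ k, n (k + 1) ≤ l * n k)
    (C : ℝ)
    (hqg : ∀ (x : X) (A : Finset ℕ), IsGreedySet f t x A → (∃ k, A.card = n k) →
      ‖proj e f A x‖ ≤ C * ‖x‖) :
    ∀ (x : X) (A : Finset ℕ), IsGreedySet f 1 x A →
      ‖proj e f A x‖ ≤
        max ((n 0 : ℝ) * (⨆ i, ‖e i‖) * (⨆ i, ‖f i‖))
          (2 * C * K * ((l : ℝ) - 1 + K)) * ‖x‖ := by
  have he0 : 0 < ‖e 0‖ := norm_pos_iff.mpr fun h => by simpa [h] using hbio 0 0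
  have hK : 0 ≤ K := nonneg_of_mul_nonneg_left ((norm_nonneg _).trans (hSchauder (e 0) 0)) he0
  have hC : 0 ≤ C := by
    have hgreedy := (isGreedySet_one_basis hbio (mem_range.mpr (hnpos 0))).mono ht1
    exact nonneg_of_mul_nonneg_left
      ((norm_nonneg _).trans (hqg (e 0) _ hgreedy ⟨0, card_range _⟩)) he0
  intro x A hA
  by_cases hsmall : #A ≤ n 0
  · have hα₁ : 0 ≤ ⨆ i, ‖e i‖ := (norm_nonneg _).trans (le_ciSup hb1 0)
    have hα₂ : 0 ≤ ⨆ i, ‖f i‖ := (norm_nonneg _).trans (le_ciSup hb2 0)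
    calc _ ≤ #A * (⨆ i, ‖e i‖) * (⨆ i, ‖f i‖) * ‖x‖ :=
          norm_proj_le_card_mul (le_ciSup hb1) (le_ciSup hb2) A x
      _ ≤ n 0 * (⨆ i, ‖e i‖) * (⨆ i, ‖f i‖) * ‖x‖ := by gcongr
      _ ≤ _ := by gcongr; exact le_max_left _ _
  push Not at hsmall
  obtain ⟨k, hk, hk'⟩ := hn.exists_between_of_tendsto_atTop hn.tendsto_atTop (x := #A + 1)
    (by omega)
  have hcl : #A / n k + 1 ≤ l := (Nat.div_lt_iff_lt_mul (hnpos k)).mpr (by linarith [hgaps k])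
  have hcl' : ((#A / n k : ℕ) : ℝ) ≤ l - 1 := by
    rw [le_sub_iff_add_le]
    exact_mod_cast hcl
  calc _ ≤ (C * K * K + (#A / n k : ℕ) * (2 * C * K)) * ‖x‖ :=
        norm_proj_le_of_card_ge hbio hSchauder (fun y B hB hBk => hqg y B hB ⟨k, hBk⟩) hC hK ht1
          (hnpos k) hA (by omega)
    _ ≤ 2 * C * K * ((l : ℝ) - 1 + K) * ‖x‖ := by
      gcongr
      nlinarith [mul_nonneg hC hK]
    _ ≤ _ := by gcongr; exact le_max_right _ _

/-- If a Schauder basis with basis constant `K` is `C`-`n`-`t`-quasi-greedy and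
the sequence `n` has `l`-bounded gaps (`n_{k+1} ≤ l·n_k`), then the basis is
quasi-greedy with constant `max{n₁·α₁·α₂, 2CK(l − 1 + K)}`. -/
theorem stmt_6 {X : Type*} [NormedAddCommGroup X] [NormedSpace ℝ X] [CompleteSpace X]
    (e : ℕ → X) (f : ℕ → X →L[ℝ] ℝ)
    (hdense : Dense (Submodule.span ℝ (Set.range e) : Set X))
    (hbio : ∀ k i, f k (e i) = if k = i then 1 else 0)
    (htotal : ∀ x : X, (∀ i, f i x = 0) → x = 0)
    (hb1 : BddAbove (Set.range fun i => ‖e i‖))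
    (hb2 : BddAbove (Set.range fun i => ‖f i‖))
    (K : ℝ)
    (hSchauder : ∀ (x : X) (m : ℕ), ‖∑ i ∈ Finset.range m, f i x • e i‖ ≤ K * ‖x‖)
    (t : ℝ) (ht0 : 0 < t) (ht1 : t ≤ 1)
    (n : ℕ → ℕ) (hn : StrictMono n) (hnpos : ∀ k, 0 < n k)
    (l : ℕ) (hl : 2 ≤ l) (hgaps : ∀ k, n (k + 1) ≤ l * n k)
    (C : ℝ)
    (hqg : ∀ (x : X) (A : Finset ℕ), IsGreedySet f t x A → (∃ k, A.card = n k) →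
      ‖proj e f A x‖ ≤ C * ‖x‖) :
    ∀ (x : X) (A : Finset ℕ), IsGreedySet f 1 x A →
      ‖proj e f A x‖ ≤
        max ((n 0 : ℝ) * (⨆ i, ‖e i‖) * (⨆ i, ‖f i‖))
          (2 * C * K * ((l : ℝ) - 1 + K)) * ‖x‖ :=
  stmt_6_general e f hbio hb1 hb2 K hSchauder t ht1 n hn hnpos l hgaps C hqg
end
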